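/- arXiv:1601.03919 — 2 statements merged into one kernel-verified Lean document; each statement's English description precedes it below -/
import Mathlib

section
/- Let Ω be a bounded domain in a proper metric measure space X and f strongly harmonic in Ω and continuous on the closure of Ω. Then inf_{∂Ω} f ≤ inf_{cl Ω} f and sup_{cl Ω} f ≤ sup_{∂Ω} f. -/
/-!
The maximum of `f` over the compact set `closure Ω` is attained. If it is attained at a point of
`Ω`, the mean value property on a small ball, on which `f` lies below the maximum, forces `f` to
equal the maximum almost everywhere on the ball, hence everywhere on it by continuity, because
nonempty open sets have positive measure. The set where the maximum is attained is thus open and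
closed in the connected set `Ω`, so `f` is constant on `closure Ω` and the maximum is attained on
the frontier as well. Doubling guarantees that balls have positive finite measure, except in the
degenerate case where every ball has real measure `0` and every mean value vanishes.
-/

open MeasureTheory Metric Set Filter Topology
open scoped ENNReal

variable {X : Type*} [MetricSpace X] [MeasurableSpace X]

/-- A locally integrable function is strongly harmonic on an open set `Ω` if it satisfies
the mean value property for every ball compactly contained in `Ω`. -/
def StronglyHarmonicOn (μ : Measure X) (Ω : Set X) (f : X → ℝ) : Prop :=
  LocallyIntegrableOn f Ω μ ∧
    ∀ x ∈ Ω, ∀ r : ℝ, 0 < r → IsCompact (closure (ball x r)) → closure (ball x r) ⊆ Ω →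
      f x = ⨍ y in ball x r, f y ∂μ

/-- Subharmonic: the value is at most the mean value over every ball compactly contained
in `Ω`. -/
def SubharmonicMVOn (μ : Measure X) (Ω : Set X) (f : X → ℝ) : Prop :=
  LocallyIntegrableOn f Ω μ ∧
    ∀ x ∈ Ω, ∀ r : ℝ, 0 < r → IsCompact (closure (ball x r)) → closure (ball x r) ⊆ Ω →
      f x ≤ ⨍ y in ball x r, f y ∂μ

/-- Superharmonic: the value is at least the mean value over every ball compactly
contained in `Ω`. -/
def SuperharmonicMVOn (μ : Measure X) (Ω : Set X) (f : X → ℝ) : Prop :=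
  LocallyIntegrableOn f Ω μ ∧
    ∀ x ∈ Ω, ∀ r : ℝ, 0 < r → IsCompact (closure (ball x r)) → closure (ball x r) ⊆ Ω →
      ⨍ y in ball x r, f y ∂μ ≤ f x

theorem exists_isCompact_closure_ball_subset {α : Type*} [PseudoMetricSpace α] [ProperSpace α]
    {U : Set α} (hU : IsOpen U) {x : α} (hx : x ∈ U) :
    ∃ r > 0, IsCompact (closure (ball x r)) ∧ closure (ball x r) ⊆ U := by
  obtain ⟨ε, hε, hball⟩ := isOpen_iff.mp hU x hx
  refine ⟨ε / 2, by positivity, ?_, ?_⟩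
  · exact (isCompact_closedBall x (ε / 2)).of_isClosed_subset isClosed_closure
      closure_ball_subset_closedBall
  · exact closure_ball_subset_closedBall.trans
      ((closedBall_subset_ball (by linarith)).trans hball)

section Measure

variable {α : Type*} {m : MeasurableSpace α} {μ : Measure α} {s : Set α}

/-- Without measurability of `s`, `μ.restrict s` may charge `sᶜ`; measurability of `f` is what
lets a pointwise bound on `s` hold `μ.restrict s`-almost everywhere. -/
theorem AEMeasurable.ae_restrict_mem_of_forall_mem {β : Type*} [MeasurableSpace β] {f : α → β}
    {t : Set β} (hf : AEMeasurable f (μ.restrict s)) (ht : MeasurableSet t)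
    (h : ∀ x ∈ s, f x ∈ t) : ∀ᵐ x ∂μ.restrict s, f x ∈ t := by
  have hmk : ∀ᵐ x ∂μ.restrict s, hf.mk f x ∈ t := by
    change μ.restrict s (hf.mk f ⁻¹' tᶜ) = 0
    rw [Measure.restrict_apply (hf.measurable_mk ht.compl)]
    have hsub : hf.mk f ⁻¹' tᶜ ∩ s ⊆ {x | ¬f x = hf.mk f x} ∩ s :=
      fun x ⟨hxt, hxs⟩ => ⟨fun hfx => hxt (hfx ▸ h x hxs), hxs⟩
    exact measure_mono_null hsub
      (nonpos_iff_eq_zero.1 ((Measure.le_restrict_apply _ _).trans_eq hf.ae_eq_mk))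
  filter_upwards [hmk, hf.ae_eq_mk] with x hx hfx
  rwa [hfx]

theorem ae_eq_const_of_ae_le_of_le_setAverage {f : α → ℝ} {c : ℝ} (hf : IntegrableOn f s μ)
    (hs : μ s ≠ ∞) (hle : ∀ᵐ x ∂μ.restrict s, f x ≤ c) (havg : c ≤ ⨍ x in s, f x ∂μ) :
    f =ᵐ[μ.restrict s] fun _ => c := by
  have hconst : IntegrableOn (fun _ => c) s μ := integrableOn_const hs
  have hnonneg : 0 ≤ᵐ[μ.restrict s] fun x => c - f x := hle.mono fun x hx => sub_nonneg.2 hx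
  have hzero : ∫ x in s, (c - f x) ∂μ = 0 := by
    refine le_antisymm ?_ (integral_nonneg_of_ae hnonneg)
    rw [integral_sub hconst hf, setIntegral_const, ← measure_smul_setAverage f hs,
      smul_eq_mul, smul_eq_mul, sub_nonpos]
    exact mul_le_mul_of_nonneg_left havg measureReal_nonneg
  filter_upwards [(integral_eq_zero_iff_of_nonneg_ae hnonneg
    (hconst.sub hf)).1 hzero] with x hx
  exact (sub_eq_zero.1 hx).symm

end Measure

section Doubling

variable {α : Type*} [PseudoMetricSpace α] {m : MeasurableSpace α}

def IsDoublingWith (μ : Measure α) (C : ℝ) : Prop :=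
  ∀ (x : α) (r : ℝ), 0 < r → μ (ball x (2 * r)) ≤ ENNReal.ofReal C * μ (ball x r)

variable {μ : Measure α} {C : ℝ}

theorem IsDoublingWith.measure_ball_two_pow_mul_le (hμ : IsDoublingWith μ C) (x : α) {r : ℝ}
    (hr : 0 < r) (n : ℕ) :
    μ (ball x (2 ^ n * r)) ≤ ENNReal.ofReal C ^ n * μ (ball x r) := by
  induction n with
  | zero => simp
  | succ n ih =>
    rw [pow_succ', mul_assoc, pow_succ', mul_assoc]
    exact (hμ x _ (by positivity)).trans (by gcongr)

theorem exists_ball_subset_ball_two_pow_mul (x y : α) (s : ℝ) {r : ℝ} (hr : 0 < r) :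
    ∃ n : ℕ, ball y s ⊆ ball x (2 ^ n * r) := by
  obtain ⟨n, hn⟩ := pow_unbounded_of_one_lt ((s + dist y x) / r) one_lt_two
  exact ⟨n, ball_subset_ball' (by rw [div_lt_iff₀ hr] at hn; linarith)⟩

theorem IsDoublingWith.measure_ball_eq_zero (hμ : IsDoublingWith μ C) {x : α} {r : ℝ}
    (hr : 0 < r) (h0 : μ (ball x r) = 0) (y : α) (s : ℝ) : μ (ball y s) = 0 := by
  obtain ⟨n, hsub⟩ := exists_ball_subset_ball_two_pow_mul x y s hr
  refine measure_mono_null hsub (nonpos_iff_eq_zero.1 ?_)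
  simpa [h0] using hμ.measure_ball_two_pow_mul_le x hr n

theorem IsDoublingWith.measure_ball_eq_top (hμ : IsDoublingWith μ C) {x : α} {r : ℝ}
    (htop : μ (ball x r) = ∞) (y : α) {s : ℝ} (hs : 0 < s) : μ (ball y s) = ∞ := by
  obtain ⟨n, hsub⟩ := exists_ball_subset_ball_two_pow_mul y x r hs
  by_contra hfin
  have := (measure_mono hsub).trans (hμ.measure_ball_two_pow_mul_le y hs n)
  rw [htop, top_le_iff] at this
  exact ENNReal.mul_ne_top (ENNReal.pow_ne_top ENNReal.ofReal_ne_top) hfin this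

/-- The second alternative covers both degenerate cases: all balls null, or all balls of infinite
measure. -/
theorem IsDoublingWith.isOpenPosMeasure_and_isLocallyFiniteMeasure_or_measureReal_ball_eq_zero
    (hμ : IsDoublingWith μ C) :
    (μ.IsOpenPosMeasure ∧ IsLocallyFiniteMeasure μ) ∨ ∀ (x : α) (r : ℝ), μ.real (ball x r) = 0 := by
  by_cases h : ∃ (x : α) (r : ℝ), 0 < r ∧ μ.real (ball x r) = 0
  · obtain ⟨x, r, hr, hxr⟩ := h
    refine Or.inr fun y s => ?_
    rcases le_or_gt s 0 with hs | hs
    · simp [ball_eq_empty.2 hs]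
    rcases ENNReal.toReal_eq_zero_iff _ |>.1 hxr with h0 | htop
    · simp [measureReal_def, hμ.measure_ball_eq_zero hr h0 y s]
    · simp [measureReal_def, hμ.measure_ball_eq_top htop y hs]
  · push Not at h
    have hball : ∀ (x : α) (r : ℝ), 0 < r → μ (ball x r) ≠ 0 ∧ μ (ball x r) ≠ ∞ :=
      fun x r hr => ENNReal.toReal_ne_zero.1 (h x r hr)
    refine Or.inl ⟨⟨fun U hU ⟨x, hx⟩ hU0 => ?_⟩,
      ⟨fun x => ⟨ball x 1, ball_mem_nhds x one_pos, (hball x 1 one_pos).2.lt_top⟩⟩⟩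
    obtain ⟨r, hr, hsub⟩ := isOpen_iff.1 hU x hx
    exact (hball x r hr).1 (measure_mono_null hsub hU0)

end Doubling

variable {μ : Measure X} {Ω : Set X} {f : X → ℝ}

theorem StronglyHarmonicOn.subharmonicMVOn (hf : StronglyHarmonicOn μ Ω f) :
    SubharmonicMVOn μ Ω f :=
  ⟨hf.1, fun x hx r hr hcpt hsub => (hf.2 x hx r hr hcpt hsub).le⟩

theorem StronglyHarmonicOn.neg (hf : StronglyHarmonicOn μ Ω f) :
    StronglyHarmonicOn μ Ω fun x => -f x :=
  ⟨hf.1.neg, fun x hx r hr hcpt hsub => by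
    simp only [hf.2 x hx r hr hcpt hsub, average_neg]⟩

theorem StronglyHarmonicOn.eqOn_zero_of_measureReal_ball_eq_zero [ProperSpace X]
    (hf : StronglyHarmonicOn μ Ω f) (hΩ : IsOpen Ω) (h0 : ∀ x r, μ.real (ball x r) = 0) :
    EqOn f 0 Ω := by
  intro x hx
  obtain ⟨r, hr, hcpt, hsub⟩ := exists_isCompact_closure_ball_subset hΩ hx
  simp [hf.2 x hx r hr hcpt hsub, setAverage_eq, h0]

section OpenPos

variable [ProperSpace X] [μ.IsOpenPosMeasure] [IsLocallyFiniteMeasure μ]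

theorem SubharmonicMVOn.eventually_eq_of_isMaxOn (hf : SubharmonicMVOn μ Ω f) (hΩ : IsOpen Ω)
    (hc : ContinuousOn f Ω) {x : X} (hx : x ∈ Ω) (hmax : IsMaxOn f Ω x) :
    ∀ᶠ y in 𝓝 x, f y = f x := by
  obtain ⟨r, hr, hcpt, hsub⟩ := exists_isCompact_closure_ball_subset hΩ hx
  have hBΩ : ball x r ⊆ Ω := subset_closure.trans hsub
  have hint : IntegrableOn f (ball x r) μ :=
    (hf.1.integrableOn_compact_subset hsub hcpt).mono_set subset_closure
  have hle : ∀ᵐ y ∂μ.restrict (ball x r), f y ≤ f x :=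
    hint.aemeasurable.ae_restrict_mem_of_forall_mem measurableSet_Iic fun y hy => hmax (hBΩ hy)
  have hae : f =ᵐ[μ.restrict (ball x r)] fun _ => f x :=
    ae_eq_const_of_ae_le_of_le_setAverage hint measure_ball_lt_top.ne hle
      (hf.2 x hx r hr hcpt hsub)
  exact mem_of_superset (ball_mem_nhds x hr)
    (μ.eqOn_open_of_ae_eq hae isOpen_ball (hc.mono hBΩ) continuousOn_const)

theorem SubharmonicMVOn.eqOn_of_isMaxOn (hf : SubharmonicMVOn μ Ω f) (hΩ : IsOpen Ω)
    (hconn : IsPreconnected Ω) (hc : ContinuousOn f Ω) {x₀ : X} (hx₀ : x₀ ∈ Ω)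
    (hmax : IsMaxOn f Ω x₀) : EqOn f (fun _ => f x₀) Ω := by
  have hmaxSet : Ω ⊆ {y | ∀ᶠ z in 𝓝 y, f z = f x₀} := by
    refine hconn.subset_left_of_subset_union isOpen_setOfPred_eventually_nhds
      (hc.isOpen_inter_preimage hΩ (isOpen_compl_singleton (x := f x₀))) ?_ ?_
      ⟨x₀, hx₀, hf.eventually_eq_of_isMaxOn hΩ hc hx₀ hmax⟩
    · exact disjoint_left.2 fun y hy hy' => hy'.2 hy.self_of_nhds
    · intro y hy
      by_cases hfy : f y = f x₀
      · have hmaxy : IsMaxOn f Ω y := fun z hz => hfy ▸ hmax hz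
        exact Or.inl (hfy ▸ hf.eventually_eq_of_isMaxOn hΩ hc hy hmaxy)
      · exact Or.inr ⟨hy, hfy⟩
  exact fun y hy => (hmaxSet hy).self_of_nhds

end OpenPos

theorem StronglyHarmonicOn.eqOn_of_isMaxOn [ProperSpace X] {C : ℝ} (hμ : IsDoublingWith μ C)
    (hf : StronglyHarmonicOn μ Ω f) (hΩ : IsOpen Ω) (hconn : IsPreconnected Ω)
    (hc : ContinuousOn f Ω) {x₀ : X} (hx₀ : x₀ ∈ Ω) (hmax : IsMaxOn f Ω x₀) :
    EqOn f (fun _ => f x₀) Ω := by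
  rcases hμ.isOpenPosMeasure_and_isLocallyFiniteMeasure_or_measureReal_ball_eq_zero with
    ⟨_, _⟩ | h0
  · exact hf.subharmonicMVOn.eqOn_of_isMaxOn hΩ hconn hc hx₀ hmax
  · have hzero := hf.eqOn_zero_of_measureReal_ball_eq_zero hΩ h0
    exact fun y hy => (hzero hy).trans (hzero hx₀).symm

theorem StronglyHarmonicOn.exists_mem_frontier_isMaxOn [ProperSpace X] {C : ℝ}
    (hμ : IsDoublingWith μ C) (hf : StronglyHarmonicOn μ Ω f) (hΩ : IsOpen Ω)
    (hconn : IsPreconnected Ω) (hbdd : Bornology.IsBounded Ω) (hne : (frontier Ω).Nonempty)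
    (hc : ContinuousOn f (closure Ω)) : ∃ z ∈ frontier Ω, IsMaxOn f (closure Ω) z := by
  obtain ⟨x₀, hx₀, hmax⟩ :=
    hbdd.isCompact_closure.exists_isMaxOn (hne.mono frontier_subset_closure) hc
  by_cases hx₀Ω : x₀ ∈ Ω
  · have hconst : EqOn f (fun _ => f x₀) (closure Ω) :=
      (hf.eqOn_of_isMaxOn hμ hΩ hconn (hc.mono subset_closure) hx₀Ω
        (hmax.on_subset subset_closure)).of_subset_closure hc continuousOn_const subset_closure
        subset_rfl
    obtain ⟨z, hz⟩ := hne
    exact ⟨z, hz, fun y hy => by simp [hconst hy, hconst (frontier_subset_closure hz)]⟩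
  · exact ⟨x₀, ⟨hx₀, by rwa [hΩ.interior_eq]⟩, hmax⟩

/-- Weak maximum principle on a bounded domain: for f strongly harmonic in
Ω and continuous on the closure, inf_{∂Ω} f ≤ inf_{cl Ω} f and sup_{cl Ω} f ≤ sup_{∂Ω} f. -/
theorem weak_maximum_principle [ProperSpace X] (μ : Measure X) (Cμ : ℝ)
    (hdbl : ∀ (x : X) (r : ℝ), 0 < r →
      μ (ball x (2 * r)) ≤ ENNReal.ofReal Cμ * μ (ball x r))
    (Ω : Set X) (hΩ : IsOpen Ω) (hconn : IsConnected Ω)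
    (hbdd : Bornology.IsBounded Ω) (hne : (frontier Ω).Nonempty)
    (f : X → ℝ) (hf : StronglyHarmonicOn μ Ω f) (hc : ContinuousOn f (closure Ω)) :
    ∀ x ∈ closure Ω, sInf (f '' frontier Ω) ≤ f x ∧ f x ≤ sSup (f '' frontier Ω) := by
  intro x hx
  have hF : IsCompact (frontier Ω) :=
    hbdd.isCompact_closure.of_isClosed_subset isClosed_frontier frontier_subset_closure
  have hfF : ContinuousOn f (frontier Ω) := hc.mono frontier_subset_closure
  obtain ⟨zmin, hzmin, hmin⟩ :=
    hf.neg.exists_mem_frontier_isMaxOn hdbl hΩ hconn.isPreconnected hbdd hne hc.neg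
  obtain ⟨zmax, hzmax, hmax⟩ :=
    hf.exists_mem_frontier_isMaxOn hdbl hΩ hconn.isPreconnected hbdd hne hc
  exact ⟨(csInf_le (hF.bddBelow_image hfF) ⟨zmin, hzmin, rfl⟩).trans (neg_le_neg_iff.1 (hmin hx)),
    (hmax hx).trans (le_csSup (hF.bddAbove_image hfF) ⟨zmax, hzmax, rfl⟩)⟩
end

section
/- Let (X,d,μ) be a doubling metric measure space satisfying the δ-annular decay property with constant A ≥ 1 and δ ∈ (0,1]. Let f be strongly harmonic and bounded with |f| ≤ M on B(x,2r), where B(x,2r) ⋐ Ω. Then for all x, y with d(x,y) < r/2, |f(x) − f(y)| ≤ 2·3^δ M C_μ³ A (d(x,y)/r)^δ. -/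
open MeasureTheory Metric Set Filter

variable {X : Type*} [MetricSpace X] [MeasurableSpace X]

/-!
By the mean value property, `f x` and `f y` are the averages of `f` over `B(x, r)` and over the
smaller ball `B(y, r - d)`, where `d = d(x, y)`. Averages of a function bounded by `M` over nested
sets `s ⊆ t` differ by at most `2 M μ(t \ s) / μ(t)`, and here `t \ s` lies in the annulus
`B(x, r) \ B(x, r - 2d)`, whose relative measure is at most `A (2d / r)^δ` by annular decay.

The σ-algebra on `X` is arbitrary, so balls need not be measurable; this is why the comparison of
averages goes through the measure `μ|t - μ|s` instead of integrals over `t \ s`.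
-/

namespace MeasureTheory

variable {α : Type*} [MeasurableSpace α] {μ ν : Measure α} {f : α → ℝ} {M : ℝ}

theorem ae_restrict_of_forall_mem_of_aemeasurable {β : Type*} [MeasurableSpace β] {g : α → β}
    {s : Set α} {T : Set β} (hg : AEMeasurable g (μ.restrict s)) (hT : MeasurableSet T)
    (h : ∀ x ∈ s, g x ∈ T) : ∀ᵐ x ∂μ.restrict s, g x ∈ T := by
  rw [ae_iff, show {x | g x ∉ T} = g ⁻¹' Tᶜ from rfl,
    Measure.restrict_apply₀ (hg.nullMeasurable hT.compl)]
  convert measure_empty (μ := μ)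
  exact eq_empty_iff_forall_notMem.2 fun x ⟨hx, hxs⟩ => hx (h x hxs)

theorem abs_average_le [IsFiniteMeasure μ] (hM0 : 0 ≤ M) (hM : ∀ᵐ x ∂μ, |f x| ≤ M) :
    |⨍ x, f x ∂μ| ≤ M := by
  rcases eq_or_ne μ 0 with rfl | hμ
  · simpa using hM0
  have := NeZero.mk hμ
  have hμpos : 0 < μ.real univ := measureReal_univ_pos
  rw [average_eq, smul_eq_mul, abs_mul, abs_inv, abs_of_pos hμpos, inv_mul_le_iff₀ hμpos,
    mul_comm]
  simpa using norm_integral_le_of_norm_le_const (μ := μ) (f := f) (C := M) (by simpa using hM)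

theorem abs_average_sub_average_le_of_le [IsFiniteMeasure μ] (hνμ : ν ≤ μ)
    (hf : Integrable f μ) (hM0 : 0 ≤ M) (hM : ∀ᵐ x ∂μ, |f x| ≤ M) :
    μ.real univ * |⨍ x, f x ∂μ - ⨍ x, f x ∂ν| ≤ 2 * M * (μ - ν).real univ := by
  have := isFiniteMeasure_of_le μ hνμ
  have hdecomp : μ - ν + ν = μ := Measure.sub_add_cancel_of_le hνμ
  have hmass : μ.real univ = (μ - ν).real univ + ν.real univ := by
    rw [← measureReal_add_apply, hdecomp]
  have hsplit : μ.real univ * ⨍ x, f x ∂μ = ∫ x, f x ∂(μ - ν) + ν.real univ * ⨍ x, f x ∂ν := by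
    rw [← smul_eq_mul, measure_smul_average, ← smul_eq_mul, measure_smul_average,
      ← integral_add_measure (hf.mono_measure Measure.sub_le) (hf.mono_measure hνμ), hdecomp]
  have hdiff : |∫ x, f x ∂(μ - ν)| ≤ M * (μ - ν).real univ := by
    simpa using norm_integral_le_of_norm_le_const (μ := μ - ν) (f := f) (C := M)
      (by simpa only [Real.norm_eq_abs] using hM.filter_mono (ae_mono Measure.sub_le))
  have hν : |⨍ x, f x ∂ν| ≤ M := abs_average_le hM0 (hM.filter_mono (ae_mono hνμ))
  have hkey : μ.real univ * (⨍ x, f x ∂μ - ⨍ x, f x ∂ν) =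
      ∫ x, f x ∂(μ - ν) - (μ - ν).real univ * ⨍ x, f x ∂ν := by
    rw [mul_sub, hsplit, hmass]
    ring
  calc μ.real univ * |⨍ x, f x ∂μ - ⨍ x, f x ∂ν|
      = |∫ x, f x ∂(μ - ν) - (μ - ν).real univ * ⨍ x, f x ∂ν| := by
        rw [← hkey, abs_mul, abs_of_nonneg measureReal_nonneg]
    _ ≤ M * (μ - ν).real univ + (μ - ν).real univ * M := by
        grw [abs_sub, hdiff, abs_mul, abs_of_nonneg measureReal_nonneg, hν]
    _ = 2 * M * (μ - ν).real univ := by ring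

theorem setAverage_eq_zero_of_measure_eq_top {s : Set α} (hs : μ s = ⊤) :
    ⨍ x in s, f x ∂μ = 0 := by
  simp [setAverage_eq, measureReal_def, hs]

theorem abs_setAverage_sub_setAverage_le {s t : Set α} (hst : s ⊆ t) (ht : μ t ≠ ⊤)
    (hf : IntegrableOn f t μ) (hM0 : 0 ≤ M) (hM : ∀ x ∈ t, |f x| ≤ M) {c : ℝ} (hc : 0 ≤ c)
    (hdiff : μ (t \ s) ≤ ENNReal.ofReal c * μ t) :
    |⨍ x in t, f x ∂μ - ⨍ x in s, f x ∂μ| ≤ 2 * M * c := by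
  have := Fact.mk ht.lt_top
  have hle : μ.restrict s ≤ μ.restrict t := Measure.restrict_mono hst le_rfl
  have := isFiniteMeasure_of_le _ hle
  rcases eq_or_ne (μ t) 0 with h0 | h0
  · have ht0 : μ.restrict t = 0 := Measure.restrict_eq_zero.2 h0
    have hs0 : μ.restrict s = 0 := le_antisymm (ht0 ▸ hle) (Measure.zero_le _)
    simp only [ht0, hs0, average_zero_measure, sub_zero, abs_zero]
    positivity
  have hpos : 0 < μ.real t := ENNReal.toReal_pos h0 ht
  have hrest : (μ.restrict t - μ.restrict s).real univ ≤ μ.real (t \ s) := by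
    refine ENNReal.toReal_mono (ne_top_of_le_ne_top ht (measure_mono sdiff_subset)) ?_
    rw [Measure.sub_apply MeasurableSet.univ hle, Measure.restrict_apply_univ,
      Measure.restrict_apply_univ]
    exact le_measure_sdiff
  have hdiff' : μ.real (t \ s) ≤ c * μ.real t := by
    simpa [measureReal_def, ENNReal.toReal_ofReal hc] using
      ENNReal.toReal_mono (ENNReal.mul_ne_top ENNReal.ofReal_ne_top ht) hdiff
  have hbound : ∀ᵐ x ∂μ.restrict t, |f x| ≤ M :=
    ae_restrict_of_forall_mem_of_aemeasurable hf.aemeasurable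
      (isClosed_le continuous_abs continuous_const).measurableSet hM
  refine le_of_mul_le_mul_left ?_ hpos
  calc μ.real t * |⨍ x in t, f x ∂μ - ⨍ x in s, f x ∂μ|
      ≤ 2 * M * (μ.restrict t - μ.restrict s).real univ := by
        simpa using abs_average_sub_average_le_of_le hle hf hM0 hbound
    _ ≤ 2 * M * (c * μ.real t) := by grw [hrest, hdiff']
    _ = μ.real t * (2 * M * c) := by ring

end MeasureTheory

def HasAnnularDecay (μ : Measure X) (A δ : ℝ) : Prop :=
  ∀ (x : X) (r ε : ℝ), 0 < r → ε ∈ Ioo (0:ℝ) 1 →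
    μ (ball x r \ ball x (r * (1 - ε))) ≤ ENNReal.ofReal (A * ε ^ δ) * μ (ball x r)

theorem HasAnnularDecay.measure_ball_sdiff_ball_le {μ : Measure X} {A δ : ℝ}
    (hann : HasAnnularDecay μ A δ) {x y : X} {r : ℝ} (hr : 0 < r) (hxy : 0 < dist x y)
    (hy : dist x y < r / 2) :
    μ (ball x r \ ball y (r - dist x y)) ≤
      ENNReal.ofReal (A * (2 * dist x y / r) ^ δ) * μ (ball x r) := by
  have hε : 2 * dist x y / r ∈ Ioo (0:ℝ) 1 :=
    ⟨by positivity, by rw [div_lt_one hr]; linarith⟩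
  have hinner : r * (1 - 2 * dist x y / r) = r - 2 * dist x y := by field_simp
  calc μ (ball x r \ ball y (r - dist x y))
      ≤ μ (ball x r \ ball x (r * (1 - 2 * dist x y / r))) :=
        measure_mono (sdiff_subset_sdiff_right (ball_subset_ball' (by linarith)))
    _ ≤ _ := hann x r _ hr hε

theorem measure_ball_four_mul_ne_top {μ : Measure X} {C : ℝ}
    (hdbl : ∀ (x : X) (r : ℝ), 0 < r → μ (ball x (2 * r)) ≤ ENNReal.ofReal C * μ (ball x r))
    {x : X} {r : ℝ} (hr : 0 < r) (h : μ (ball x r) ≠ ⊤) : μ (ball x (4 * r)) ≠ ⊤ := by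
  have hle : μ (ball x (4 * r)) ≤ ENNReal.ofReal C * (ENNReal.ofReal C * μ (ball x r)) :=
    calc μ (ball x (4 * r)) = μ (ball x (2 * (2 * r))) := by ring_nf
      _ ≤ ENNReal.ofReal C * μ (ball x (2 * r)) := hdbl x _ (by positivity)
      _ ≤ ENNReal.ofReal C * (ENNReal.ofReal C * μ (ball x r)) := by grw [hdbl x r hr]
  exact ne_top_of_le_ne_top
    (ENNReal.mul_ne_top ENNReal.ofReal_ne_top (ENNReal.mul_ne_top ENNReal.ofReal_ne_top h)) hle

namespace StronglyHarmonicOn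

variable {μ : Measure X} {Ω K : Set X} {f : X → ℝ}

theorem integrableOn (hf : StronglyHarmonicOn μ Ω f) (hK : IsCompact (closure K))
    (hKΩ : closure K ⊆ Ω) : IntegrableOn f K μ :=
  (hf.1.integrableOn_compact_subset hKΩ hK).mono_set subset_closure

theorem eq_setAverage_ball (hf : StronglyHarmonicOn μ Ω f) (hK : IsCompact (closure K))
    (hKΩ : closure K ⊆ Ω) {y : X} {s : ℝ} (hs : 0 < s) (hyK : ball y s ⊆ K) :
    f y = ⨍ z in ball y s, f z ∂μ :=
  hf.2 y (hKΩ (subset_closure (hyK (mem_ball_self hs)))) s hs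
    (hK.of_isClosed_subset isClosed_closure (closure_mono hyK)) ((closure_mono hyK).trans hKΩ)

end StronglyHarmonicOn

theorem holder_of_annular_decay_general (μ : Measure X) (Cμ A δ : ℝ) (hCμ : 1 ≤ Cμ)
    (hA : 1 ≤ A) (hδ : δ ∈ Ioc (0:ℝ) 1)
    (hdbl : ∀ (x : X) (r : ℝ), 0 < r →
      μ (ball x (2 * r)) ≤ ENNReal.ofReal Cμ * μ (ball x r))
    (hann : ∀ (x : X) (r ε : ℝ), 0 < r → ε ∈ Ioo (0:ℝ) 1 →
      μ (ball x r \ ball x (r * (1 - ε))) ≤ ENNReal.ofReal (A * ε ^ δ) * μ (ball x r))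
    (Ω : Set X) (f : X → ℝ) (hf : StronglyHarmonicOn μ Ω f)
    (x : X) (r M : ℝ) (hr : 0 < r)
    (hcpt : IsCompact (closure (ball x (2 * r)))) (hsub : closure (ball x (2 * r)) ⊆ Ω)
    (hM : ∀ z ∈ ball x (2 * r), |f z| ≤ M) :
    ∀ y : X, dist x y < r / 2 →
      |f x - f y| ≤ 2 * 3 ^ δ * M * Cμ ^ 3 * A * (dist x y / r) ^ δ := by
  intro y hy
  obtain hxy | hxy := (dist_nonneg (x := x) (y := y)).eq_or_lt
  · rw [← hxy, dist_eq_zero.1 hxy.symm, zero_div, Real.zero_rpow hδ.1.ne']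
    simp
  have hM0 : 0 ≤ M := (abs_nonneg _).trans (hM x (mem_ball_self (by linarith)))
  have hBx : ball x r ⊆ ball x (2 * r) := ball_subset_ball (by linarith)
  have hBy : ball y (r - dist x y) ⊆ ball x r := ball_subset_ball' (by rw [dist_comm]; linarith)
  rw [hf.eq_setAverage_ball hcpt hsub hr hBx,
    hf.eq_setAverage_ball hcpt hsub (by linarith) (hBy.trans hBx)]
  by_cases hy_top : μ (ball y (r - dist x y)) = ⊤
  · rw [setAverage_eq_zero_of_measure_eq_top hy_top,
      setAverage_eq_zero_of_measure_eq_top (top_unique (hy_top ▸ measure_mono hBy))]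
    simp only [sub_zero, abs_zero]
    positivity
  have hx_top : μ (ball x r) ≠ ⊤ :=
    ne_top_of_le_ne_top (measure_ball_four_mul_ne_top hdbl (by linarith) hy_top)
      (measure_mono (ball_subset_ball' (by linarith)))
  calc _ ≤ 2 * M * (A * (2 * dist x y / r) ^ δ) :=
        abs_setAverage_sub_setAverage_le hBy hx_top (hf.integrableOn hcpt hsub |>.mono_set hBx)
          hM0 (fun z hz => hM z (hBx hz)) (by positivity)
          (HasAnnularDecay.measure_ball_sdiff_ball_le hann hr hxy hy)
    _ = 2 * M * A * (dist x y / r) ^ δ * 2 ^ δ := by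
        rw [mul_div_assoc, Real.mul_rpow zero_le_two (by positivity)]
        ring
    _ ≤ 2 * M * A * (dist x y / r) ^ δ * (3 ^ δ * Cμ ^ 3) := by
        gcongr
        calc (2 : ℝ) ^ δ ≤ 3 ^ δ := by gcongr <;> linarith [hδ.1]
          _ ≤ 3 ^ δ * Cμ ^ 3 := le_mul_of_one_le_right (by positivity) (one_le_pow₀ hCμ)
    _ = _ := by ring

/-- Hölder estimate under the δ-annular decay property: if |f| ≤ M on
B(x,2r) ⋐ Ω and d(x,y) < r/2 then |f(x) − f(y)| ≤ 2·3^δ M C_μ³ A (d(x,y)/r)^δ. -/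
theorem holder_of_annular_decay (μ : Measure X) (Cμ A δ : ℝ) (hCμ : 1 ≤ Cμ)
    (hA : 1 ≤ A) (hδ : δ ∈ Ioc (0:ℝ) 1)
    (hdbl : ∀ (x : X) (r : ℝ), 0 < r →
      μ (ball x (2 * r)) ≤ ENNReal.ofReal Cμ * μ (ball x r))
    (hann : ∀ (x : X) (r ε : ℝ), 0 < r → ε ∈ Ioo (0:ℝ) 1 →
      μ (ball x r \ ball x (r * (1 - ε))) ≤ ENNReal.ofReal (A * ε ^ δ) * μ (ball x r))
    (Ω : Set X) (hΩ : IsOpen Ω) (f : X → ℝ) (hf : StronglyHarmonicOn μ Ω f)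
    (x : X) (r M : ℝ) (hr : 0 < r)
    (hcpt : IsCompact (closure (ball x (2 * r)))) (hsub : closure (ball x (2 * r)) ⊆ Ω)
    (hM : ∀ z ∈ ball x (2 * r), |f z| ≤ M) :
    ∀ y : X, dist x y < r / 2 →
      |f x - f y| ≤ 2 * 3 ^ δ * M * Cμ ^ 3 * A * (dist x y / r) ^ δ :=
  holder_of_annular_decay_general μ Cμ A δ hCμ hA hδ hdbl hann Ω f hf x r M hr hcpt hsub hM
end
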